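/- Let n be a positive integer, Q a noncrossing pair partition of {0, 1, …, 2n−1}, and π(Q) the corresponding noncrossing partition of {0, 1, …, n−1} under the identification bijection. Then the Hausdorff distance in ℂ between the lamination Λ_{2n}(Q) (drawn on the 2n-th roots of unity) and the lamination Λ_n(π(Q)) (drawn on the n-th roots of unity) is at most π/n. -/

import Mathlib

/-- `ℓ : ℕ → ℕ` is a (normalized) `2n`-step Dyck path: `ℓ 0 = 0`, `ℓ j = 0` for every
`j ≥ 2n` (in particular `ℓ (2n) = 0`), and consecutive values differ by exactly `1`
up to time `2n`. -/
def IsDyckPath (n : ℕ) (ℓ : ℕ → ℕ) : Prop :=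
  ℓ 0 = 0 ∧ (∀ j, 2 * n ≤ j → ℓ j = 0) ∧
    ∀ k, k < 2 * n → ℓ (k + 1) = ℓ k + 1 ∨ ℓ k = ℓ (k + 1) + 1

/-- The relation `i ∼_ℓ j` for a `2n`-step Dyck path:
`i, j ≤ 2n` and `ℓ i = ℓ j = min_{min(i,j) ≤ k ≤ max(i,j)} ℓ k`. -/
def DyckRel (n : ℕ) (ℓ : ℕ → ℕ) (i j : ℕ) : Prop :=
  i ≤ 2 * n ∧ j ≤ 2 * n ∧ ℓ i = ℓ j ∧
    ∀ k, min i j ≤ k → k ≤ max i j → ℓ i ≤ ℓ k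

/-- `P` is a set partition of `{0, 1, …, n-1}`, blocks being the elements of `P`. -/
def IsPartitionOf (n : ℕ) (P : Set (Set ℕ)) : Prop :=
  (∀ B ∈ P, B.Nonempty) ∧ (∀ B ∈ P, B ⊆ Set.Iio n) ∧
    ∀ i, i < n → ∃! B, B ∈ P ∧ i ∈ B

/-- A collection of blocks is noncrossing: there are no `a < b < c < d`
with `a, c` in one block and `b, d` in a different block. -/
def IsNoncrossing (P : Set (Set ℕ)) : Prop :=
  ∀ a b c d : ℕ, a < b → b < c → c < d →
    ∀ B ∈ P, ∀ B' ∈ P, a ∈ B → c ∈ B → b ∈ B' → d ∈ B' → B = B'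

/-- `P` is a noncrossing partition of `{0, 1, …, n-1}`. -/
def IsNCPartition (n : ℕ) (P : Set (Set ℕ)) : Prop :=
  IsPartitionOf n P ∧ IsNoncrossing P

/-- `P` is a noncrossing pair partition of `{0, 1, …, n-1}`:
a noncrossing partition all of whose blocks have exactly two elements. -/
def IsNCPairPartition (n : ℕ) (P : Set (Set ℕ)) : Prop :=
  IsNCPartition n P ∧ ∀ B ∈ P, B.ncard = 2

/-- `Φ(ℓ)`: the set partition of `{0, 1, …, n-1}` whose blocks are the equivalence
classes of `∼_ℓ` among the even indices `0, 2, …, 2n-2`, identifying `2j` with `j`. -/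
def dyckEvenClasses (n : ℕ) (ℓ : ℕ → ℕ) : Set (Set ℕ) :=
  {B | ∃ j, j < n ∧ B = {i | i < n ∧ DyckRel n ℓ (2 * i) (2 * j)}}

/-- `Ψ(ℓ)`: the set partition of `{0, 1, …, n-1}` whose blocks are the equivalence
classes of `∼_ℓ` among the odd indices `1, 3, …, 2n-1`, identifying `2j+1` with `j`. -/
def dyckOddClasses (n : ℕ) (ℓ : ℕ → ℕ) : Set (Set ℕ) :=
  {B | ∃ j, j < n ∧ B = {i | i < n ∧ DyckRel n ℓ (2 * i + 1) (2 * j + 1)}}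

/-- The set partition of `{0, 1, …, 2n-1}` whose blocks are the equivalence classes of
`∼_ℓ` among the even indices `0, 2, …, 2n-2` together with the equivalence classes of
`∼_ℓ` among the odd indices `1, 3, …, 2n-1`. -/
def dyckParityClasses (n : ℕ) (ℓ : ℕ → ℕ) : Set (Set ℕ) :=
  {B | ∃ j, j < 2 * n ∧ B = {i | i < 2 * n ∧ i % 2 = j % 2 ∧ DyckRel n ℓ i j}}

/-- The vertex `ω_n^k = exp(2πik/n)` of the regular `n`-gon. -/
noncomputable def vtx (n k : ℕ) : ℂ :=
  Complex.exp (2 * Real.pi * Complex.I * k / n)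

/-- The point `exp(2πis)` of the unit circle. -/
noncomputable def circlePt (s : ℝ) : ℂ :=
  Complex.exp (2 * Real.pi * Complex.I * s)

/-- The closed polygonal set associated with a block `B ⊆ {0, …, n-1}`: the union of the
segments joining cyclically consecutive vertices `ω_n^i`, `i ∈ B` (edges join `i < j` in `B`
with no element of `B` strictly between them, together with the closing edge joining the
minimum and the maximum of `B`; a singleton contributes a single point). -/
noncomputable def blockPolygon (n : ℕ) (B : Set ℕ) : Set ℂ :=
  ⋃ i ∈ B, ⋃ j ∈ B,
    ⋃ (_ : i ≤ j ∧ ((∀ k ∈ B, ¬(i < k ∧ k < j)) ∨ (∀ k ∈ B, i ≤ k ∧ k ≤ j))),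
      segment ℝ (vtx n i) (vtx n j)

/-- The lamination `Λ_n(P) ⊆ ℂ` of a set partition `P` of `{0, …, n-1}`. -/
noncomputable def lamination (n : ℕ) (P : Set (Set ℕ)) : Set ℂ :=
  ⋃ B ∈ P, blockPolygon n B

/-- The insert move at position `k` on a `2n`-step Dyck path: insert one up-step
followed by one down-step right after time `k`. -/
def insertMove (ℓ : ℕ → ℕ) (k : ℕ) : ℕ → ℕ :=
  fun j => if j ≤ k then ℓ j else if j = k + 1 then ℓ k + 1 else ℓ (j - 2)

/-- `m(ℓ,k)`: the first time after `k` (and at most `2n`) at which the path goes strictly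
below its height at time `k`, or `2n+1` if there is no such time. -/
noncomputable def liftTime (n : ℕ) (ℓ : ℕ → ℕ) (k : ℕ) : ℕ :=
  sInf ({j | k < j ∧ j ≤ 2 * n ∧ ℓ j < ℓ k} ∪ {2 * n + 1})

/-- The lift move at position `k` on a `2n`-step Dyck path: lift up by one the part of the
path between time `k` and time `m(ℓ,k)`. -/
noncomputable def liftMove (n : ℕ) (ℓ : ℕ → ℕ) (k : ℕ) : ℕ → ℕ :=
  fun j => if j ≤ k then ℓ j
    else if j ≤ liftTime n ℓ k then ℓ (j - 1) + 1
    else ℓ (j - 2)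

/-- Apply the move `ε ∈ {insert, lift}` (`true` = insert, `false` = lift) at position `k`. -/
noncomputable def applyMove (n : ℕ) (ℓ : ℕ → ℕ) (k : ℕ) (ε : Bool) : ℕ → ℕ :=
  if ε then insertMove ℓ k else liftMove n ℓ k

/-- The halving map sending a `4n`-step Dyck path `ℓ` (with `|ℓ_{2k+2} - ℓ_{2k}| = 2`)
to the path `(ℓ_0/2, ℓ_2/2, …, ℓ_{4n}/2)`. -/
def halveMap (ℓ : ℕ → ℕ) : ℕ → ℕ := fun j => ℓ (2 * j) / 2

/-- `φ(j) = ⌈j/2⌉ mod n`. -/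
def pairPhi (n j : ℕ) : ℕ := ((j + 1) / 2) % n

/-- The edge relation on `{0, …, n-1}`: `x` and `y` are joined whenever `x = φ(a)` and
`y = φ(b)` for some block `{a, b}` of `Q`. -/
def pairRel (n : ℕ) (Q : Set (Set ℕ)) (x y : ℕ) : Prop :=
  ∃ B ∈ Q, ∃ a ∈ B, ∃ b ∈ B, pairPhi n a = x ∧ pairPhi n b = y

/-- `π(Q)`: the set partition of `{0, …, n-1}` whose blocks are the connected components of
the graph on `{0, …, n-1}` with an edge `{φ(a), φ(b)}` for each block `{a, b}` of `Q`. -/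
def pairProj (n : ℕ) (Q : Set (Set ℕ)) : Set (Set ℕ) :=
  {C | ∃ x, x < n ∧ C = {y | Relation.ReflTransGen (pairRel n Q) x y}}

/-- `A` is a lamination of the closed unit disk: a closed subset of the disk which is a union
of chords (segments with endpoints on the unit circle, possibly degenerate) whose
intersections with the open unit disk are pairwise disjoint. -/
def IsLamination (A : Set ℂ) : Prop :=
  IsClosed A ∧ A ⊆ Metric.closedBall (0 : ℂ) 1 ∧
    ∃ C : Set (ℂ × ℂ),
      (∀ p ∈ C, ‖p.1‖ = 1 ∧ ‖p.2‖ = 1) ∧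
      A = ⋃ p ∈ C, segment ℝ p.1 p.2 ∧
      ∀ p ∈ C, ∀ q ∈ C, segment ℝ p.1 p.2 ≠ segment ℝ q.1 q.2 →
        Disjoint (segment ℝ p.1 p.2 ∩ Metric.ball (0 : ℂ) 1)
          (segment ℝ q.1 q.2 ∩ Metric.ball (0 : ℂ) 1)

/-- `s ∼_f t`: `f s = f t = min_{min(s,t) ≤ r ≤ max(s,t)} f r`. -/
def simRel (f : ℝ → ℝ) (s t : ℝ) : Prop :=
  f s = f t ∧ ∀ r, min s t ≤ r → r ≤ max s t → f s ≤ f r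

/-- `L(f)`: the union of the chords `[exp(2πis), exp(2πit)]` over all `s ∼_f t`
in `[0,1]`. -/
noncomputable def brownLam (f : ℝ → ℝ) : Set ℂ :=
  ⋃ s ∈ Set.Icc (0 : ℝ) 1, ⋃ t ∈ Set.Icc (0 : ℝ) 1, ⋃ (_ : simRel f s t),
    segment ℝ (circlePt s) (circlePt t)


lemma lip_exp : LipschitzWith 1 (circleMap 0 1) := by
  apply lipschitzWith_of_nnnorm_deriv_le
  · exact fun x => (hasDerivAt_circleMap 0 1 x).differentiableAt
  · intro x
    rw [(hasDerivAt_circleMap 0 1 x).deriv]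
    simp [← NNReal.coe_le_coe, ← norm_toNNReal, norm_mul, norm_circleMap_zero]

lemma vtx_eq_circleMap (n k : ℕ) :
    vtx n k = circleMap 0 1 (2 * Real.pi * k / n) := by
  simp only [circleMap, Complex.ofReal_div, Complex.ofReal_mul, Complex.ofReal_ofNat,
    Complex.ofReal_natCast, vtx, zero_add, Complex.ofReal_one, one_mul]
  ring_nf

lemma dist_vtx_adj (n : ℕ) (hn : 0 < n) (k : ℕ) :
    dist (vtx (2*n) k) (vtx (2*n) (k+1)) ≤ Real.pi / n := by
  rw [vtx_eq_circleMap, vtx_eq_circleMap]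
  have := lip_exp.dist_le_mul (2 * Real.pi * k / ((2*n:ℕ):ℝ)) (2 * Real.pi * (k+1:ℕ) / ((2*n:ℕ):ℝ))
  refine this.trans ?_
  rw [NNReal.coe_one, one_mul, Real.dist_eq]
  have hnr : (0:ℝ) < n := by exact_mod_cast hn
  push_cast
  have h : 2 * Real.pi * ↑k / (2*(n:ℝ)) - 2*Real.pi*((k:ℝ)+1)/(2*(n:ℝ)) = -(Real.pi/n) := by
    field_simp
    ring
  rw [h, abs_neg, abs_of_nonneg (by positivity)]

lemma vtx_double (n x : ℕ) (hn : 0 < n) : vtx n x = vtx (2*n) (2*x) := by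
  unfold vtx
  congr 1
  have hn' : (n:ℂ) ≠ 0 := Nat.cast_ne_zero.mpr hn.ne'
  push_cast
  rw [div_eq_div_iff hn' (by simpa using hn')]
  ring

lemma vtx_top (n : ℕ) (hn : 0 < n) : vtx (2*n) (2*n) = vtx n 0 := by
  have h2n : ((2*n:ℕ):ℂ) ≠ 0 := Nat.cast_ne_zero.mpr (by omega)
  unfold vtx
  rw [Nat.cast_zero, mul_zero, zero_div, Complex.exp_zero, mul_div_assoc,
    div_self h2n, mul_one]
  exact Complex.exp_two_pi_mul_I

lemma segment_close {A B A' B' : ℂ} {r : ℝ} (hA : dist A A' ≤ r) (hB : dist B B' ≤ r)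
    {p : ℂ} (hp : p ∈ segment ℝ A B) : ∃ q ∈ segment ℝ A' B', dist p q ≤ r := by
  obtain ⟨u, v, hu, hv, huv, rfl⟩ := hp
  refine ⟨u • A' + v • B', ⟨u, v, hu, hv, huv, rfl⟩, ?_⟩
  have : (u • A + v • B) - (u • A' + v • B') = u • (A - A') + v • (B - B') := by
    simp [smul_sub]; ring
  rw [dist_eq_norm, this]
  calc ‖u • (A - A') + v • (B - B')‖ ≤ ‖u • (A - A')‖ + ‖v • (B - B')‖ := norm_add_le _ _
    _ ≤ u * r + v * r := by
        rw [norm_smul, norm_smul]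
        gcongr
        · simp [abs_of_nonneg hu, le_refl]
        · exact (dist_eq_norm A A') ▸ hA
        · simp [abs_of_nonneg hv, le_refl]
        · exact (dist_eq_norm B B') ▸ hB
    _ = r := by rw [← add_mul, huv, one_mul]

section Comb

variable {n : ℕ} {Q : Set (Set ℕ)} (hn : 0 < n) (hQ : IsNCPairPartition (2 * n) Q)

include hQ
set_option linter.unusedSectionVars false

/-- blocks lie in Iio (2n) -/
lemma blk_lt {B : Set ℕ} (hB : B ∈ Q) {a : ℕ} (ha : a ∈ B) : a < 2 * n :=
  hQ.1.1.2.1 B hB ha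

/-- block uniqueness -/
lemma blk_unique {B B' : Set ℕ} (hB : B ∈ Q) (hB' : B' ∈ Q) {a : ℕ}
    (ha : a ∈ B) (ha' : a ∈ B') : B = B' := by
  obtain ⟨U, -, hU⟩ := hQ.1.1.2.2 a (blk_lt hQ hB ha)
  rw [hU B ⟨hB, ha⟩, hU B' ⟨hB', ha'⟩]

lemma blk_exists {a : ℕ} (ha : a < 2 * n) : ∃ B ∈ Q, a ∈ B := by
  obtain ⟨U, ⟨h1, h2⟩, -⟩ := hQ.1.1.2.2 a ha
  exact ⟨U, h1, h2⟩

/-- each block with a member is a pair -/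
lemma blk_pair {B : Set ℕ} (hB : B ∈ Q) {a : ℕ} (ha : a ∈ B) :
    ∃ b, b ≠ a ∧ B = {a, b} := by
  obtain ⟨x, y, hxy, rfl⟩ := Set.ncard_eq_two.mp (hQ.2 B hB)
  rcases ha with rfl | rfl
  · exact ⟨y, hxy.symm, rfl⟩
  · exact ⟨x, hxy, by rw [Set.pair_comm]⟩

lemma blk_eq_pair {B : Set ℕ} (hB : B ∈ Q) {a b : ℕ} (ha : a ∈ B) (hb : b ∈ B)
    (hab : a ≠ b) : B = {a, b} := by
  obtain ⟨c, hc, rfl⟩ := blk_pair hQ hB ha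
  rcases hb with rfl | rfl
  · exact absurd rfl hab
  · rfl

/-- crossing lemma: the partner of a point strictly inside a chord is strictly inside -/
lemma cross {B B' : Set ℕ} (hB : B ∈ Q) (hB' : B' ∈ Q) (hne : B ≠ B')
    {a b c d : ℕ} (ha : a ∈ B) (hb : b ∈ B) (hab : a < b)
    (hc : c ∈ B') (hd : d ∈ B') (h1 : a < c) (h2 : c < b) : a < d ∧ d < b := by
  have hnc := hQ.1.2
  have hda : d ≠ a := fun h => hne (blk_unique hQ hB hB' ha (h ▸ hd))
  have hdb : d ≠ b := fun h => hne (blk_unique hQ hB hB' hb (h ▸ hd))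
  rcases lt_trichotomy d a with h | h | h
  · exact absurd (hnc d a c b h h1 h2 B' hB' B hB hd hc ha hb).symm hne
  · exact absurd h hda
  rcases lt_trichotomy d b with h' | h' | h'
  · exact ⟨h, h'⟩
  · exact absurd h' hdb
  · exact absurd (hnc a c b d h1 h2 h' B hB B' hB' ha hb hc hd) hne


/-- a Q-closed interval [a,b] has even size -/
lemma closed_even : ∀ m : ℕ, ∀ a b : ℕ, b + 1 - a = m → b < 2 * n →
    (∀ B ∈ Q, ∀ c ∈ B, a ≤ c → c ≤ b → ∀ d ∈ B, a ≤ d ∧ d ≤ b) → Even m := by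
  intro m
  induction m using Nat.strong_induction_on with
  | _ m ih =>
  intro a b hm hb hcl
  rcases Nat.lt_or_ge b a with hba | hab
  · have : m = 0 := by omega
    simp [this]
  · have ha2 : a < 2 * n := lt_of_le_of_lt hab hb
    obtain ⟨B, hB, haB⟩ := blk_exists hQ ha2
    obtain ⟨d, hd, hBeq⟩ := blk_pair hQ hB haB
    have hdB : d ∈ B := by rw [hBeq]; right; rfl
    have hdab : a ≤ d ∧ d ≤ b := (hcl B hB a haB le_rfl hab d hdB).imp id id
    have had : a < d := lt_of_le_of_ne hdab.1 (Ne.symm hd)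
    -- interval (a, d) is Q-closed
    have hcl1 : ∀ B' ∈ Q, ∀ c ∈ B', a + 1 ≤ c → c ≤ d - 1 → ∀ d' ∈ B', a + 1 ≤ d' ∧ d' ≤ d - 1 := by
      intro B' hB' c hc hc1 hc2 d' hd'
      have hBne : B ≠ B' := by
        intro h
        have : c ∈ B := h ▸ hc
        rw [hBeq] at this
        rcases this with rfl | rfl <;> omega
      have := cross hQ hB hB' hBne haB hdB had hc hd' (by omega) (by omega)
      omega
    -- interval (d, b) is Q-closed
    have hcl2 : ∀ B' ∈ Q, ∀ c ∈ B', d + 1 ≤ c → c ≤ b → ∀ d' ∈ B', d + 1 ≤ d' ∧ d' ≤ b := by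
      intro B' hB' c hc hc1 hc2 d' hd'
      have hBne : B ≠ B' := by
        intro h
        have : c ∈ B := h ▸ hc
        rw [hBeq] at this
        rcases this with rfl | rfl <;> omega
      have houter := hcl B' hB' c hc (by omega) hc2 d' hd'
      have hd'a : d' ≠ a := by
        intro h
        exact hBne (blk_unique hQ hB hB' haB (h ▸ hd'))
      have hd'd : d' ≠ d := by
        intro h
        exact hBne (blk_unique hQ hB hB' hdB (h ▸ hd'))
      rcases Nat.lt_or_ge d' d with hlt | hge
      · have : a < d' := by omega
        exact absurd (hQ.1.2 a d' d c this hlt (by omega) B hB B' hB'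
          haB hdB hd' hc) hBne
      · omega
    have he1 := ih (d - 1 + 1 - (a + 1)) (by omega) (a+1) (d-1) rfl
      (by omega) hcl1
    have he2 := ih (b + 1 - (d + 1)) (by omega) (d+1) b rfl hb hcl2
    obtain ⟨k1, hk1⟩ := he1
    obtain ⟨k2, hk2⟩ := he2
    exact ⟨k1 + k2 + 1, by omega⟩

/-- endpoints of a pair have opposite parity -/
lemma pair_parity {B : Set ℕ} (hB : B ∈ Q) {a b : ℕ} (ha : a ∈ B) (hb : b ∈ B)
    (hab : a < b) : (b - a) % 2 = 1 := by
  have hBeq := blk_eq_pair hQ hB ha hb (by omega)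
  have hb2 : b < 2 * n := blk_lt hQ hB hb
  have hcl : ∀ B' ∈ Q, ∀ c ∈ B', a ≤ c → c ≤ b → ∀ d ∈ B', a ≤ d ∧ d ≤ b := by
    intro B' hB' c hc hc1 hc2 d hd
    by_cases hBB : B = B'
    · subst hBB
      rw [hBeq] at hd
      rcases hd with rfl | rfl <;> omega
    · rcases Nat.eq_or_lt_of_le hc1 with rfl | hc1'
      · exact absurd (blk_unique hQ hB hB' ha hc) hBB
      rcases Nat.eq_or_lt_of_le hc2 with rfl | hc2'
      · exact absurd (blk_unique hQ hB hB' hb hc) hBB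
      have := cross hQ hB hB' hBB ha hb hab hc hd hc1' hc2'
      omega
  obtain ⟨k, hk⟩ := closed_even hQ (b + 1 - a) a b rfl hb2 hcl
  omega


omit hQ in
lemma phi_even {x : ℕ} (hx : x < n) : pairPhi n (2 * x) = x := by
  unfold pairPhi
  have : (2 * x + 1) / 2 = x := by omega
  rw [this, Nat.mod_eq_of_lt hx]

omit hQ in
lemma phi_odd {w : ℕ} (hw : 1 ≤ w) : pairPhi n (2 * w - 1) = w % n := by
  unfold pairPhi
  congr 1
  omega

omit hQ in
lemma phi_lt (hn : 0 < n) : ∀ j, pairPhi n j < n := fun j => Nat.mod_lt _ hn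

omit hQ in
lemma phi_preimage (hn : 0 < n) {c j : ℕ} (hc : c < 2 * n) (hj : pairPhi n c = j) :
    c = 2 * j ∨ (1 ≤ j ∧ c = 2 * j - 1) ∨ (j = 0 ∧ c = 2 * n - 1) := by
  unfold pairPhi at hj
  set q := (c + 1) / 2 with hq
  have hq2 : c = 2 * q ∨ (1 ≤ q ∧ c = 2 * q - 1) := by omega
  have hqn : q ≤ n := by omega
  rcases Nat.lt_or_ge q n with h | h
  · rw [Nat.mod_eq_of_lt h] at hj
    omega
  · have : q = n := by omega
    subst this
    rw [Nat.mod_self] at hj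
    omega

omit hQ in
lemma conf {I : Set ℕ}
    (hI : ∀ B ∈ Q, ∀ c ∈ B, ∀ d ∈ B, (pairPhi n c ∈ I ↔ pairPhi n d ∈ I)) :
    ∀ u v, Relation.ReflTransGen (pairRel n Q) u v → (u ∈ I ↔ v ∈ I) := by
  intro u v h
  induction h with
  | refl => exact Iff.rfl
  | tail hst hstep ih =>
    obtain ⟨B, hB, a, ha, b, hb, rfl, rfl⟩ := hstep
    exact ih.trans (hI B hB a ha b hb)

omit hQ in
lemma rtg_symm {u v : ℕ} (h : Relation.ReflTransGen (pairRel n Q) u v) :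
    Relation.ReflTransGen (pairRel n Q) v u := by
  induction h with
  | refl => exact Relation.ReflTransGen.refl
  | tail hst hstep ih =>
    refine Relation.ReflTransGen.head ?_ ih
    obtain ⟨B, hB, a, ha, b, hb, h1, h2⟩ := hstep
    exact ⟨B, hB, b, hb, a, ha, h2, h1⟩

omit hQ in
lemma rtg_lt (hn : 0 < n) {u v : ℕ} (hu : u < n) (h : Relation.ReflTransGen (pairRel n Q) u v) :
    v < n := by
  induction h with
  | refl => exact hu
  | tail hst hstep ih =>
    obtain ⟨B, hB, a, ha, b, hb, h1, h2⟩ := hstep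
    exact h2 ▸ phi_lt hn b

omit hQ in
lemma pair_edge {B : Set ℕ} (hB : B ∈ Q) {a b : ℕ} (ha : a ∈ B) (hb : b ∈ B) :
    Relation.ReflTransGen (pairRel n Q) (pairPhi n a) (pairPhi n b) :=
  Relation.ReflTransGen.single ⟨B, hB, a, ha, b, hb, rfl, rfl⟩

/-- if `{2j-1, 2j} ∈ Q` then the class of `j` is a singleton -/
lemma class_single (hn : 0 < n) {B : Set ℕ} (hB : B ∈ Q) {j : ℕ} (hj : 1 ≤ j) (hjn : j < n)
    (hBeq : B = {2 * j - 1, 2 * j}) :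
    ∀ v, Relation.ReflTransGen (pairRel n Q) j v → v = j := by
  intro v h
  induction h with
  | refl => rfl
  | tail hst hstep ih =>
    subst ih
    obtain ⟨B', hB', a, ha, b, hb, h1, h2⟩ := hstep
    have ha2 : a < 2 * n := blk_lt hQ hB' ha
    have := phi_preimage hn ha2 h1
    have haB : a ∈ B := by
      rw [hBeq]
      rcases this with h | ⟨h1', h2'⟩ | ⟨h1', h2'⟩
      · right; exact h
      · left; exact h2'
      · omega
    have : B = B' := blk_unique hQ hB hB' haB ha
    subst this
    rw [hBeq] at hb
    rcases hb with rfl | rfl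
    · rw [← h2, phi_odd hj, Nat.mod_eq_of_lt hjn]
    · rw [← h2, phi_even hjn]


lemma conf_chord {B : Set ℕ} (hB : B ∈ Q) {a b : ℕ} (ha : a ∈ B) (hb : b ∈ B)
    (hab : a < b) (I : Set ℕ)
    (hphiI : ∀ e, e < 2 * n → e ∉ B → (pairPhi n e ∈ I ↔ (a < e ∧ e < b)))
    (hIab : (pairPhi n a ∈ I) ↔ (pairPhi n b ∈ I)) :
    ∀ u v, Relation.ReflTransGen (pairRel n Q) u v → (u ∈ I ↔ v ∈ I) := by
  apply conf
  intro B' hB' c hc d hd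
  by_cases hBB : B = B'
  · subst hBB
    have hBeq := blk_eq_pair hQ hB ha hb (by omega)
    rw [hBeq] at hc hd
    rcases hc with rfl | rfl <;> rcases hd with rfl | rfl
    · exact Iff.rfl
    · exact hIab
    · exact hIab.symm
    · exact Iff.rfl
  · have hcB : c ∉ B := fun h => hBB (blk_unique hQ hB hB' h hc)
    have hdB : d ∉ B := fun h => hBB (blk_unique hQ hB hB' h hd)
    rw [hphiI c (blk_lt hQ hB' hc) hcB, hphiI d (blk_lt hQ hB' hd) hdB]
    constructor
    · intro ⟨h1, h2⟩
      exact cross hQ hB hB' hBB ha hb hab hc hd h1 h2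
    · intro ⟨h1, h2⟩
      exact cross hQ hB hB' hBB ha hb hab hd hc h1 h2

lemma confA (hn : 0 < n) {B : Set ℕ} {x w : ℕ} (hB : B ∈ Q) (hxw : x < w) (hwn : w < n)
    (h1 : 2 * x ∈ B) (h2 : 2 * w - 1 ∈ B) :
    ∀ v, Relation.ReflTransGen (pairRel n Q) x v → ¬(x < v ∧ v < w) := by
  have hxn : x < n := by omega
  have key := conf_chord hQ hB h1 h2 (by omega) {v | x < v ∧ v < w} ?_ ?_
  · intro v hv
    have := (key x v hv).symm
    simp only [Set.mem_setOf_eq] at this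
    intro hcon
    have : x < x ∧ x < w := ⟨(this.mp hcon).1, hxw⟩
    omega
  · intro e he heB
    obtain h | ⟨hj, h⟩ | ⟨hj, h⟩ := phi_preimage hn he rfl
    all_goals (have := phi_lt hn e; simp only [Set.mem_setOf_eq]; omega)
  · rw [phi_even hxn, phi_odd (by omega), Nat.mod_eq_of_lt hwn]
    simp only [Set.mem_setOf_eq]
    omega

lemma confB (hn : 0 < n) {B : Set ℕ} {x : ℕ} (hB : B ∈ Q) (hxn : x < n)
    (h1 : 2 * x ∈ B) (h2 : 2 * n - 1 ∈ B) (hlt : 2 * x < 2 * n - 1) :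
    ∀ v, Relation.ReflTransGen (pairRel n Q) x v → ¬(x < v ∧ v < n) := by
  have key := conf_chord hQ hB h1 h2 hlt {v | x < v ∧ v < n} ?_ ?_
  · intro v hv
    have := (key x v hv).symm
    simp only [Set.mem_setOf_eq] at this
    intro hcon
    have := this.mp hcon
    omega
  · intro e he heB
    obtain h | ⟨hj, h⟩ | ⟨hj, h⟩ := phi_preimage hn he rfl
    · have := phi_lt hn e; simp only [Set.mem_setOf_eq]; omega
    · have := phi_lt hn e; simp only [Set.mem_setOf_eq]; omega
    · exact (heB (h.symm ▸ h2)).elim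
  · rw [phi_even hxn, show 2 * n - 1 = 2 * n - 1 from rfl, phi_odd (by omega)]
    have : n % n = 0 := Nat.mod_self n
    rw [this]
    simp only [Set.mem_setOf_eq]
    omega

lemma confC (hn : 0 < n) {B : Set ℕ} {w y : ℕ} (hB : B ∈ Q) (hwy : w ≤ y)
    (hw1 : 1 ≤ w) (hyn : y < n) (h1 : 2 * w - 1 ∈ B) (h2 : 2 * y ∈ B) :
    ∀ v, Relation.ReflTransGen (pairRel n Q) w v → (w ≤ v ∧ v ≤ y) := by
  have key := conf_chord hQ hB h1 h2 (by omega) {v | w ≤ v ∧ v ≤ y} ?_ ?_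
  · intro v hv
    have := (key w v hv).mp
    simp only [Set.mem_setOf_eq] at this
    exact this ⟨le_rfl, hwy⟩
  · intro e he heB
    have hew : e ≠ 2 * w - 1 := fun h => heB (h ▸ h1)
    have hey : e ≠ 2 * y := fun h => heB (h ▸ h2)
    obtain h | ⟨hj, h⟩ | ⟨hj, h⟩ := phi_preimage hn he rfl
    all_goals (have := phi_lt hn e; simp only [Set.mem_setOf_eq]; omega)
  · rw [phi_odd hw1, phi_even hyn, Nat.mod_eq_of_lt (by omega)]
    simp only [Set.mem_setOf_eq]
    omega

end Comb


lemma mem_blockPolygon_seg {m : ℕ} {B : Set ℕ} {i j : ℕ} (hi : i ∈ B) (hj : j ∈ B)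
    (hij : i ≤ j)
    (hcond : (∀ k ∈ B, ¬(i < k ∧ k < j)) ∨ (∀ k ∈ B, i ≤ k ∧ k ≤ j)) :
    segment ℝ (vtx m i) (vtx m j) ⊆ blockPolygon m B := by
  intro p hp
  unfold blockPolygon
  rw [Set.mem_iUnion₂]
  refine ⟨i, hi, ?_⟩
  rw [Set.mem_iUnion₂]
  refine ⟨j, hj, ?_⟩
  rw [Set.mem_iUnion]
  exact ⟨⟨hij, hcond⟩, hp⟩

lemma point_mem_blockPolygon {m : ℕ} {B : Set ℕ} {c : ℕ} (hc : c ∈ B) :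
    vtx m c ∈ blockPolygon m B :=
  mem_blockPolygon_seg hc hc le_rfl (Or.inl (fun k _ h => by omega))
    (left_mem_segment ℝ _ _)

lemma blockPolygon_subset_lamination {m : ℕ} {P : Set (Set ℕ)} {B : Set ℕ} (hB : B ∈ P) :
    blockPolygon m B ⊆ lamination m P := by
  intro p hp
  unfold lamination
  rw [Set.mem_iUnion₂]
  exact ⟨B, hB, hp⟩

lemma class_mem_pairProj {n : ℕ} {Q : Set (Set ℕ)} {x : ℕ} (hx : x < n) :
    {y | Relation.ReflTransGen (pairRel n Q) x y} ∈ pairProj n Q :=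
  ⟨x, hx, rfl⟩

section Main

variable {n : ℕ} {Q : Set (Set ℕ)} (hn : 0 < n) (hQ : IsNCPairPartition (2 * n) Q)

include hn hQ
set_option linter.unusedSectionVars false

lemma dist_vtx_phi {a : ℕ} (ha : a < 2 * n) :
    dist (vtx (2 * n) a) (vtx n (pairPhi n a)) ≤ Real.pi / n := by
  have hpin : (0:ℝ) ≤ Real.pi / n := by positivity
  obtain h | ⟨hj, h⟩ | ⟨hj, h⟩ := phi_preimage hn ha rfl
  · rw [vtx_double n (pairPhi n a) hn, ← h]
    simpa using hpin
  · have h2 : a + 1 = 2 * pairPhi n a := by omega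
    rw [vtx_double n (pairPhi n a) hn, ← h2]
    exact dist_vtx_adj n hn a
  · have h4 : vtx n (pairPhi n a) = vtx (2*n) (a+1) := by
      rw [hj, ← vtx_top n hn]
      congr 1
      omega
    rw [h4]
    exact dist_vtx_adj n hn a

/-- forward direction: every point of `Λ_{2n}(Q)` is close to `Λ_n(π(Q))` -/
lemma forward_dir {p : ℂ} (hp : p ∈ lamination (2 * n) Q) :
    ∃ q ∈ lamination n (pairProj n Q), dist p q ≤ Real.pi / n := by
  have hpin : (0:ℝ) ≤ Real.pi / n := by positivity
  rw [lamination, Set.mem_iUnion₂] at hp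
  obtain ⟨B, hB, hp⟩ := hp
  rw [blockPolygon, Set.mem_iUnion₂] at hp
  obtain ⟨i', hi', hp⟩ := hp
  rw [Set.mem_iUnion₂] at hp
  obtain ⟨j', hj', hp⟩ := hp
  rw [Set.mem_iUnion] at hp
  obtain ⟨⟨hij', -⟩, hp⟩ := hp
  -- the point near a single vertex of the n-gon
  have hnear : ∀ c, c < 2 * n → ∃ q ∈ lamination n (pairProj n Q),
      dist (vtx (2*n) c) q ≤ Real.pi / n := by
    intro c hc
    refine ⟨vtx n (pairPhi n c), ?_, dist_vtx_phi hn hQ hc⟩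
    exact blockPolygon_subset_lamination (class_mem_pairProj (phi_lt hn (c : ℕ)))
      (point_mem_blockPolygon Relation.ReflTransGen.refl)
  rcases Nat.eq_or_lt_of_le hij' with rfl | hlt
  · rw [segment_same] at hp
    rw [hp]
    exact hnear i' (blk_lt hQ hB hi')
  -- now i' < j' and B = {i', j'}
  have hBeq : B = {i', j'} := blk_eq_pair hQ hB hi' hj' (by omega)
  have hi2 : i' < 2 * n := blk_lt hQ hB hi'
  have hj2 : j' < 2 * n := blk_lt hQ hB hj'
  set x := pairPhi n i' with hx
  set y := pairPhi n j' with hy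
  have hxn : x < n := phi_lt hn i'
  have hyn : y < n := phi_lt hn j'
  by_cases hxy : x = y
  · -- both endpoints near the same vertex
    obtain ⟨q, hq, -⟩ := hnear i' hi2
    have d1 : dist (vtx (2*n) i') (vtx n x) ≤ Real.pi / n := dist_vtx_phi hn hQ hi2
    have d2 : dist (vtx (2*n) j') (vtx n x) ≤ Real.pi / n := hxy ▸ dist_vtx_phi hn hQ hj2
    obtain ⟨q, hq, hdq⟩ := segment_close d1 d2 hp
    rw [segment_same, Set.mem_singleton_iff] at hq
    subst hq
    refine ⟨vtx n x, ?_, hdq⟩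
    exact blockPolygon_subset_lamination (class_mem_pairProj hxn)
      (point_mem_blockPolygon Relation.ReflTransGen.refl)
  · -- genuine chord
    have hpar := pair_parity hQ hB hi' hj' hlt
    have hedge : Relation.ReflTransGen (pairRel n Q) x y := pair_edge hB hi' hj'
    obtain hie | ⟨hx1, hie⟩ | ⟨hx0, hie⟩ := phi_preimage hn hi2 hx.symm
    · -- i' = 2x even, so j' odd
      obtain hje | ⟨hy1, hje⟩ | ⟨hy0, hje⟩ := phi_preimage hn hj2 hy.symm
      · omega
      · -- j' = 2y - 1 : shape A
        have hxyl : x < y := by omega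
        have hconf := confA hQ hn hB hxyl hyn (hie ▸ hi') (hje ▸ hj')
        set C := {v | Relation.ReflTransGen (pairRel n Q) x v} with hC
        have hxC : x ∈ C := Relation.ReflTransGen.refl
        have hyC : y ∈ C := hedge
        have hseg : segment ℝ (vtx n x) (vtx n y) ⊆ lamination n (pairProj n Q) := by
          refine subset_trans ?_ (blockPolygon_subset_lamination (class_mem_pairProj hxn))
          exact mem_blockPolygon_seg hxC hyC hxyl.le (Or.inl (fun k hk => hconf k hk))
        have d1 : dist (vtx (2*n) i') (vtx n x) ≤ Real.pi / n := dist_vtx_phi hn hQ hi2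
        have d2 : dist (vtx (2*n) j') (vtx n y) ≤ Real.pi / n := dist_vtx_phi hn hQ hj2
        obtain ⟨q, hq, hdq⟩ := segment_close d1 d2 hp
        exact ⟨q, hseg hq, hdq⟩
      · -- j' = 2n - 1, y = 0 : shape B
        have hx1 : 1 ≤ x := by omega
        have hconf := confB hQ hn hB hxn (hie ▸ hi') (hje ▸ hj') (by omega)
        set C := {v | Relation.ReflTransGen (pairRel n Q) x v} with hC
        have hxC : x ∈ C := Relation.ReflTransGen.refl
        have hyC : (0:ℕ) ∈ C := hy0 ▸ hedge
        have hseg : segment ℝ (vtx n 0) (vtx n x) ⊆ lamination n (pairProj n Q) := by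
          refine subset_trans ?_ (blockPolygon_subset_lamination (class_mem_pairProj hxn))
          refine mem_blockPolygon_seg hyC hxC (Nat.zero_le x) (Or.inr ?_)
          intro k hk
          have hk1 := hconf k hk
          have hk2 := rtg_lt hn hxn hk
          omega
        have d1 : dist (vtx (2*n) i') (vtx n x) ≤ Real.pi / n := dist_vtx_phi hn hQ hi2
        have d2 : dist (vtx (2*n) j') (vtx n 0) ≤ Real.pi / n := by
          have := dist_vtx_phi hn hQ hj2
          rwa [← hy, hy0] at this
        obtain ⟨q, hq, hdq⟩ := segment_close d1 d2 hp
        rw [segment_symm] at hq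
        exact ⟨q, hseg hq, hdq⟩
    · -- i' = 2x - 1 odd, so j' even : shape C
      obtain hje | ⟨hy1, hje⟩ | ⟨hy0, hje⟩ := phi_preimage hn hj2 hy.symm
      · have hxyl : x < y := by omega
        have hconf := confC hQ hn hB hxyl.le hx1 hyn (hie ▸ hi') (hje ▸ hj')
        set C := {v | Relation.ReflTransGen (pairRel n Q) x v} with hC
        have hxC : x ∈ C := Relation.ReflTransGen.refl
        have hyC : y ∈ C := hedge
        have hseg : segment ℝ (vtx n x) (vtx n y) ⊆ lamination n (pairProj n Q) := by
          refine subset_trans ?_ (blockPolygon_subset_lamination (class_mem_pairProj hxn))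
          exact mem_blockPolygon_seg hxC hyC hxyl.le (Or.inr (fun k hk => hconf k hk))
        have d1 : dist (vtx (2*n) i') (vtx n x) ≤ Real.pi / n := dist_vtx_phi hn hQ hi2
        have d2 : dist (vtx (2*n) j') (vtx n y) ≤ Real.pi / n := dist_vtx_phi hn hQ hj2
        obtain ⟨q, hq, hdq⟩ := segment_close d1 d2 hp
        exact ⟨q, hseg hq, hdq⟩
      · omega
      · omega
    · -- i' = 2n - 1 impossible since i' < j' < 2n
      omega

/-- backward direction: every point of `Λ_n(π(Q))` is close to `Λ_{2n}(Q)` -/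
lemma backward_dir {p : ℂ} (hp : p ∈ lamination n (pairProj n Q)) :
    ∃ q ∈ lamination (2 * n) Q, dist p q ≤ Real.pi / n := by
  have hpin : (0:ℝ) ≤ Real.pi / n := by positivity
  rw [lamination, Set.mem_iUnion₂] at hp
  obtain ⟨C, hC, hp⟩ := hp
  obtain ⟨x0, hx0, rfl⟩ := hC
  rw [blockPolygon, Set.mem_iUnion₂] at hp
  obtain ⟨i, hi, hp⟩ := hp
  rw [Set.mem_iUnion₂] at hp
  obtain ⟨j, hj, hp⟩ := hp
  rw [Set.mem_iUnion] at hp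
  obtain ⟨⟨hij, hcond⟩, hp⟩ := hp
  have hiC : Relation.ReflTransGen (pairRel n Q) x0 i := hi
  have hjC : Relation.ReflTransGen (pairRel n Q) x0 j := hj
  have hin : i < n := rtg_lt hn hx0 hiC
  have hjn : j < n := rtg_lt hn hx0 hjC
  have hijR : Relation.ReflTransGen (pairRel n Q) i j := (rtg_symm hiC).trans hjC
  -- reach from i or j
  have hreach : ∀ v, Relation.ReflTransGen (pairRel n Q) i v →
      v ∈ {y | Relation.ReflTransGen (pairRel n Q) x0 y} := fun v hv => hiC.trans hv
  have hreachj : ∀ v, Relation.ReflTransGen (pairRel n Q) j v →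
      v ∈ {y | Relation.ReflTransGen (pairRel n Q) x0 y} := fun v hv => hjC.trans hv
  rcases Nat.eq_or_lt_of_le hij with rfl | hlt
  · -- degenerate point
    rw [segment_same] at hp
    obtain ⟨B, hB, hiB⟩ := blk_exists hQ (show 2 * i < 2 * n by omega)
    refine ⟨vtx (2*n) (2*i), blockPolygon_subset_lamination hB (point_mem_blockPolygon hiB), ?_⟩
    rw [hp, ← vtx_double n i hn]
    simpa using hpin
  rcases hcond with h1 | h2
  · -- consecutive side: look at the block of 2 i
    obtain ⟨B, hB, hiB⟩ := blk_exists hQ (show 2 * i < 2 * n by omega)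
    obtain ⟨b, hbne, hBeq⟩ := blk_pair hQ hB hiB
    have hbB : b ∈ B := by rw [hBeq]; right; rfl
    have hb2 : b < 2 * n := blk_lt hQ hB hbB
    have hbodd : b % 2 = 1 := by
      rcases Nat.lt_or_ge b (2*i) with h | h
      · have := pair_parity hQ hB hbB hiB (by omega)
        omega
      · have := pair_parity hQ hB hiB hbB (by omega)
        omega
    set w := (b + 1) / 2 with hw
    have hbw : b = 2 * w - 1 := by omega
    have hw1 : 1 ≤ w := by omega
    have hwn2 : w ≤ n := by omega
    have hphib : pairPhi n b = w % n := by rw [hbw]; exact phi_odd hw1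
    rcases Nat.eq_or_lt_of_le hwn2 with heq | hwn
    · -- b = 2n - 1 : contradiction via confB
      exfalso
      have hb2n : 2 * n - 1 ∈ B := by
        have : b = 2 * n - 1 := by omega
        exact this ▸ hbB
      have hconf := confB hQ hn hB hin hiB hb2n (by omega)
      exact hconf j hijR ⟨hlt, hjn⟩
    · have hphib' : pairPhi n b = w := by rw [hphib, Nat.mod_eq_of_lt hwn]
      have hwC : Relation.ReflTransGen (pairRel n Q) i w := by
        have := pair_edge (n := n) hB hiB hbB
        rwa [phi_even hin, hphib'] at this
      rcases Nat.lt_or_ge (2*i) b with hbgt | hble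
      · -- b > 2i, so w > i
        have hwi : i < w := by omega
        have hwnotin := h1 w (hreach w hwC)
        rcases Nat.lt_or_ge j w with hjw | hjw
        · -- j < w : contradiction via confA
          exfalso
          have hconf := confA hQ hn hB hwi hwn hiB (hbw ▸ hbB)
          exact hconf j hijR ⟨hlt, hjw⟩
        · have hwj' : w = j := by
            rcases Nat.eq_or_lt_of_le hjw with h | h
            · omega
            · exact absurd ⟨hwi, h⟩ hwnotin
          -- realized side {2i, 2j-1}
          have d1 : dist (vtx n i) (vtx (2*n) (2*i)) ≤ Real.pi / n := by
            rw [← vtx_double n i hn]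
            simpa using hpin
          have d2 : dist (vtx n j) (vtx (2*n) (2*j-1)) ≤ Real.pi / n := by
            have hA : vtx n j = vtx (2*n) ((2*j-1)+1) := by
              rw [vtx_double n j hn]
              congr 1
              omega
            rw [dist_comm, hA]
            exact dist_vtx_adj n hn _
          obtain ⟨q, hq, hdq⟩ := segment_close d1 d2 hp
          refine ⟨q, ?_, hdq⟩
          refine blockPolygon_subset_lamination hB (mem_blockPolygon_seg hiB
            (show 2*j-1 ∈ B from hwj' ▸ hbw ▸ hbB) (by omega) (Or.inr ?_) hq)
          intro k hk
          rw [hBeq] at hk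
          rcases hk with rfl | rfl <;> omega
      · -- b < 2i
        rcases Nat.eq_or_lt_of_le (show w ≤ i by omega) with hwi | hwi
        · -- w = i : singleton class, contradiction
          exfalso
          have hBeq' : B = {2 * i - 1, 2 * i} := by
            rw [hBeq, hbw, hwi, Set.pair_comm]
          have hsing := class_single (j := i) hQ hn hB (by omega) hin hBeq'
          have := hsing j hijR
          omega
        · -- w < i : contradiction via confC
          exfalso
          have hconf := confC hQ hn hB (le_of_lt hwi) hw1 hin (hbw ▸ hbB) hiB
          have := hconf j ((rtg_symm hwC).trans hijR)
          omega
  · -- min-max side: look at the block of 2 j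
    obtain ⟨B, hB, hjB⟩ := blk_exists hQ (show 2 * j < 2 * n by omega)
    obtain ⟨b, hbne, hBeq⟩ := blk_pair hQ hB hjB
    have hbB : b ∈ B := by rw [hBeq]; right; rfl
    have hb2 : b < 2 * n := blk_lt hQ hB hbB
    have hbodd : b % 2 = 1 := by
      rcases Nat.lt_or_ge b (2*j) with h | h
      · have := pair_parity hQ hB hbB hjB (by omega)
        omega
      · have := pair_parity hQ hB hjB hbB (by omega)
        omega
    set w := (b + 1) / 2 with hw
    have hbw : b = 2 * w - 1 := by omega
    have hw1 : 1 ≤ w := by omega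
    have hwn2 : w ≤ n := by omega
    have hphib : pairPhi n b = w % n := by rw [hbw]; exact phi_odd hw1
    rcases Nat.eq_or_lt_of_le hwn2 with heq | hwn
    · -- b = 2n-1, realized side {2j, 2n-1} with i = 0
      have hb2n : b = 2 * n - 1 := by omega
      have hphib' : pairPhi n b = 0 := by rw [hphib, heq, Nat.mod_self]
      have h0C : Relation.ReflTransGen (pairRel n Q) j 0 := by
        have := pair_edge (n := n) hB hjB hbB
        rwa [phi_even hjn, hphib'] at this
      have hi0 : i = 0 := by
        have := (h2 0 (hreachj 0 h0C)).1
        omega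
      have d1 : dist (vtx n i) (vtx (2*n) (2*n-1)) ≤ Real.pi / n := by
        have hA : vtx n i = vtx (2*n) ((2*n-1)+1) := by
          rw [hi0, ← vtx_top n hn]
          congr 1
          omega
        rw [hA, dist_comm]
        exact dist_vtx_adj n hn _
      have d2 : dist (vtx n j) (vtx (2*n) (2*j)) ≤ Real.pi / n := by
        rw [← vtx_double n j hn]
        simpa using hpin
      obtain ⟨q, hq, hdq⟩ := segment_close d1 d2 hp
      refine ⟨q, ?_, hdq⟩
      rw [segment_symm] at hq
      refine blockPolygon_subset_lamination hB (mem_blockPolygon_seg hjB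
        (show 2*n-1 ∈ B from hb2n ▸ hbB) (by omega) (Or.inr ?_) hq)
      intro k hk
      rw [hBeq] at hk
      rcases hk with rfl | rfl <;> omega
    · have hphib' : pairPhi n b = w := by rw [hphib, Nat.mod_eq_of_lt hwn]
      have hwC : Relation.ReflTransGen (pairRel n Q) j w := by
        have := pair_edge (n := n) hB hjB hbB
        rwa [phi_even hjn, hphib'] at this
      have hwle := h2 w (hreachj w hwC)
      rcases Nat.lt_or_ge (2*j) b with hbgt | hble
      · omega
      · rcases Nat.eq_or_lt_of_le (show w ≤ j by omega) with hwj | hwj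
        · -- w = j : singleton class, contradiction
          exfalso
          have hBeq' : B = {2 * j - 1, 2 * j} := by
            rw [hBeq, hbw, hwj, Set.pair_comm]
          have hsing := class_single (j := j) hQ hn hB (by omega) hjn hBeq'
          have := hsing i (rtg_symm hijR)
          omega
        · -- w < j : w = i, realized side {2i-1, 2j}
          have hconf := confC hQ hn hB (le_of_lt hwj) hw1 hjn (hbw ▸ hbB) hjB
          have hwi : w = i := by
            have h3 := (hconf i ((rtg_symm hwC).trans (rtg_symm hijR))).1
            have h4 := hwle.1
            omega
          have hi1 : 1 ≤ i := by omega
          have d1 : dist (vtx n i) (vtx (2*n) (2*i-1)) ≤ Real.pi / n := by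
            have hA : vtx n i = vtx (2*n) ((2*i-1)+1) := by
              rw [vtx_double n i hn]
              congr 1
              omega
            rw [dist_comm, hA]
            exact dist_vtx_adj n hn _
          have d2 : dist (vtx n j) (vtx (2*n) (2*j)) ≤ Real.pi / n := by
            rw [← vtx_double n j hn]
            simpa using hpin
          obtain ⟨q, hq, hdq⟩ := segment_close d1 d2 hp
          refine ⟨q, ?_, hdq⟩
          refine blockPolygon_subset_lamination hB (mem_blockPolygon_seg
            (show 2*i-1 ∈ B from hwi ▸ hbw ▸ hbB) hjB (by omega) (Or.inr ?_) hq)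
          intro k hk
          rw [hBeq] at hk
          rcases hk with rfl | rfl <;> omega

end Main

/-- For a noncrossing pair partition `Q` of `{0, …, 2n-1}`, the Hausdorff
distance between the lamination `Λ_{2n}(Q)` and the lamination `Λ_n(π(Q))` is at most
`π/n`. -/
theorem hausdorffDist_pairProj_le (n : ℕ) (hn : 0 < n) (Q : Set (Set ℕ))
    (hQ : IsNCPairPartition (2 * n) Q) :
    Metric.hausdorffDist (lamination (2 * n) Q) (lamination n (pairProj n Q))
      ≤ Real.pi / n := by
  apply Metric.hausdorffDist_le_of_mem_dist (by positivity)
  · exact fun x hx => forward_dir hn hQ hx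
  · exact fun x hx => backward_dir hn hQ hx
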